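/- Bobkov induction lemma: let J : [0,1] → ℝ_{≥0} and fix p ≥ 1, with ‖·‖ denoting the ℓ^p norm on ℝ^{n+1}. Suppose that for every f : {-1,1} → [0,1], J(E[f]) ≤ E[‖(D₁f, J(f))‖]. Then for every n and every f : {-1,1}^n → [0,1], J(E[f]) ≤ E[‖(∇f, J(f))‖], where ∇f = (D₁f, …, D_nf) with D_i f(x) = (f(x^{i→1}) - f(x^{i→-1}))/2. -/
import Mathlib


open Finset

/-- The discrete `i`-th derivative `D_i f(x) = (f(x^{i→1}) - f(x^{i→-1}))/2`. -/
noncomputable def discDeriv {n : ℕ} (f : (Fin n → Bool) → ℝ) (i : Fin n)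
    (x : Fin n → Bool) : ℝ :=
  (f (Function.update x i true) - f (Function.update x i false)) / 2

/-- The `ℓ^p` norm of the vector in `ℝ^{n+1}` formed by the gradient `∇f(x)` together with
the extra coordinate `t`. -/
noncomputable def gradJNorm {n : ℕ} (p : ℝ) (f : (Fin n → Bool) → ℝ)
    (x : Fin n → Bool) (t : ℝ) : ℝ :=
  ((∑ i : Fin n, |discDeriv f i x| ^ p) + |t| ^ p) ^ (1 / p)

/-- Splitting a sum over `Fin (n+1) → Bool` along the first coordinate. -/
lemma sum_cons_split {n : ℕ} (F : (Fin (n + 1) → Bool) → ℝ) :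
    ∑ x, F x = ∑ y : Fin n → Bool, (F (Fin.cons true y) + F (Fin.cons false y)) := by
  rw [← Equiv.sum_comp (Fin.consEquiv (fun _ => Bool)) F, Fintype.sum_prod_type,
    Fintype.sum_bool, ← Finset.sum_add_distrib]
  rfl

/-- `ℓ^p` norm of a halved vector. -/
lemma half_lp (p : ℝ) (hp : 1 ≤ p) {m : ℕ} (w : Fin m → ℝ) :
    (∑ i, |w i / 2| ^ p) ^ (1 / p) = (∑ i, |w i| ^ p) ^ (1 / p) / 2 := by
  have hp0 : (0 : ℝ) < p := lt_of_lt_of_le one_pos hp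
  have h2 : ((2 : ℝ) ^ p) ^ (1 / p) = 2 := by
    rw [← Real.rpow_mul (by norm_num), mul_one_div_cancel hp0.ne', Real.rpow_one]
  have e : ∀ i : Fin m, |w i / 2| ^ p = |w i| ^ p / (2 : ℝ) ^ p := by
    intro i
    rw [abs_div, abs_two, Real.div_rpow (abs_nonneg _) (by norm_num)]
  simp_rw [e]
  rw [← Finset.sum_div, Real.div_rpow (by positivity) (by positivity), h2]

/-- Key pointwise inequality: half-Minkowski with a monotone extra coordinate. -/
lemma key_ineq (p : ℝ) (hp : 1 ≤ p) {m : ℕ} (u v : Fin m → ℝ) (s t r : ℝ)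
    (hs : 0 ≤ s) (ht : 0 ≤ t) (hr0 : 0 ≤ r) (hr : r ≤ (s + t) / 2) :
    ((∑ i, |(u i + v i) / 2| ^ p) + |r| ^ p) ^ (1 / p)
      ≤ (((∑ i, |u i| ^ p) + |s| ^ p) ^ (1 / p)
        + ((∑ i, |v i| ^ p) + |t| ^ p) ^ (1 / p)) / 2 := by
  have hp0 : (0 : ℝ) < p := lt_of_lt_of_le one_pos hp
  have hst : (0 : ℝ) ≤ (s + t) / 2 := by linarith
  have h1 : ((∑ i, |(u i + v i) / 2| ^ p) + |r| ^ p) ^ (1 / p)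
      ≤ ((∑ i, |(u i + v i) / 2| ^ p) + |(s + t) / 2| ^ p) ^ (1 / p) := by
    apply Real.rpow_le_rpow (by positivity) _ (by positivity)
    have : |r| ^ p ≤ |(s + t) / 2| ^ p := by
      rw [abs_of_nonneg hr0, abs_of_nonneg hst]
      exact Real.rpow_le_rpow hr0 hr hp0.le
    linarith
  refine h1.trans ?_
  set U : Fin (m + 1) → ℝ := Fin.cons s u with hU
  set V : Fin (m + 1) → ℝ := Fin.cons t v with hV
  have hM := Real.Lp_add_le Finset.univ (fun i => U i / 2) (fun i => V i / 2) hp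
  have e1 : ∀ i : Fin (m + 1), U i / 2 + V i / 2 = (U i + V i) / 2 := fun i => by ring
  simp_rw [e1] at hM
  rw [half_lp p hp, half_lp p hp, half_lp p hp] at hM
  have eL : ∑ i : Fin (m + 1), |U i + V i| ^ p
      = |s + t| ^ p + ∑ i : Fin m, |u i + v i| ^ p := by
    rw [Fin.sum_univ_succ]; simp [hU, hV]
  have eU : ∑ i : Fin (m + 1), |U i| ^ p = |s| ^ p + ∑ i : Fin m, |u i| ^ p := by
    rw [Fin.sum_univ_succ]; simp [hU]
  have eV : ∑ i : Fin (m + 1), |V i| ^ p = |t| ^ p + ∑ i : Fin m, |v i| ^ p := by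
    rw [Fin.sum_univ_succ]; simp [hV]
  rw [eL, eU, eV] at hM
  have hL : ((∑ i, |(u i + v i) / 2| ^ p) + |(s + t) / 2| ^ p) ^ (1 / p)
      = ((|s + t| ^ p + ∑ i : Fin m, |u i + v i| ^ p) ^ (1 / p)) / 2 := by
    have hhalf := half_lp p hp
      (Fin.cons (s + t) (fun j => u j + v j) : Fin (m + 1) → ℝ)
    rw [Fin.sum_univ_succ, Fin.sum_univ_succ] at hhalf
    simp only [Fin.cons_zero, Fin.cons_succ] at hhalf
    rw [add_comm (∑ i : Fin m, |(u i + v i) / 2| ^ p) (|(s + t) / 2| ^ p)]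
    exact hhalf
  rw [hL, add_comm (∑ i : Fin m, |u i| ^ p) (|s| ^ p),
    add_comm (∑ i : Fin m, |v i| ^ p) (|t| ^ p)]
  linarith

/-- Bobkov induction lemma: if `J(E[f]) ≤ E[‖(D₁f, J(f))‖_p]` holds for all one-bit
functions `f : {-1,1} → [0,1]`, then `J(E[f]) ≤ E[‖(∇f, J(f))‖_p]` for all `n` and all
`f : {-1,1}^n → [0,1]`. -/
theorem bobkov_induction (J : ℝ → ℝ) (hJ : ∀ α ∈ Set.Icc (0 : ℝ) 1, 0 ≤ J α)
    (p : ℝ) (hp : 1 ≤ p)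
    (base : ∀ f : (Fin 1 → Bool) → ℝ, (∀ x, f x ∈ Set.Icc (0 : ℝ) 1) →
      J ((2 : ℝ)⁻¹ * ∑ x : Fin 1 → Bool, f x)
        ≤ (2 : ℝ)⁻¹ * ∑ x : Fin 1 → Bool, gradJNorm p f x (J (f x))) :
    ∀ (n : ℕ) (f : (Fin n → Bool) → ℝ), (∀ x, f x ∈ Set.Icc (0 : ℝ) 1) →
      J ((2 ^ n : ℝ)⁻¹ * ∑ x : Fin n → Bool, f x)
        ≤ (2 ^ n : ℝ)⁻¹ * ∑ x : Fin n → Bool, gradJNorm p f x (J (f x)) := by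
  have hp0 : (0 : ℝ) < p := lt_of_lt_of_le one_pos hp
  intro n
  induction n with
  | zero =>
    intro f hf
    simp only [pow_zero, inv_one, one_mul]
    rw [Finset.univ_unique, Finset.sum_singleton, Finset.sum_singleton]
    unfold gradJNorm
    rw [Finset.univ_eq_empty, Finset.sum_empty, zero_add,
      ← Real.rpow_mul (abs_nonneg _), mul_one_div_cancel hp0.ne', Real.rpow_one,
      abs_of_nonneg (hJ _ (hf _))]
  | succ n ih =>
    intro f hf
    set ft : (Fin n → Bool) → ℝ := fun y => f (Fin.cons true y) with hft
    set ff : (Fin n → Bool) → ℝ := fun y => f (Fin.cons false y) with hff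
    set d : (Fin n → Bool) → ℝ := fun y => (ft y - ff y) / 2 with hd
    set g : (Fin n → Bool) → ℝ := fun y => (ft y + ff y) / 2 with hg'
    have hg : ∀ y, g y ∈ Set.Icc (0 : ℝ) 1 := by
      intro y
      obtain ⟨h1, h2⟩ := hf (Fin.cons true y)
      obtain ⟨h3, h4⟩ := hf (Fin.cons false y)
      constructor <;> simp only [hg', ft, ff] <;> linarith
    -- derivative computations
    have hD0 : ∀ (b : Bool) y, discDeriv f 0 (Fin.cons b y) = d y := by
      intro b y
      simp only [discDeriv, Fin.update_cons_zero, hd, hft, hff]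
    have hDsucc : ∀ (b : Bool) y (i : Fin n),
        discDeriv f i.succ (Fin.cons b y) = discDeriv (fun z => f (Fin.cons b z)) i y := by
      intro b y i
      simp only [discDeriv, ← Fin.cons_update]
    have hgrad : ∀ (b : Bool) y (t : ℝ), gradJNorm p f (Fin.cons b y) t
        = ((∑ i : Fin n, |discDeriv (fun z => f (Fin.cons b z)) i y| ^ p)
            + (|d y| ^ p + |t| ^ p)) ^ (1 / p) := by
      intro b y t
      unfold gradJNorm
      congr 1
      rw [Fin.sum_univ_succ, hD0]
      simp_rw [hDsucc]
      ring
    set c : Bool → (Fin n → Bool) → ℝ :=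
      fun b y => (|d y| ^ p + |J (f (Fin.cons b y))| ^ p) ^ (1 / p) with hc
    have hc_nonneg : ∀ b y, 0 ≤ c b y := fun b y => Real.rpow_nonneg (by positivity) _
    have hc_pow : ∀ b y, |c b y| ^ p = |d y| ^ p + |J (f (Fin.cons b y))| ^ p := by
      intro b y
      rw [abs_of_nonneg (hc_nonneg b y), hc, one_div,
        Real.rpow_inv_rpow (by positivity) hp0.ne']
    -- base case gives control of the extra coordinate
    have hbase : ∀ y, J (g y) ≤ (c true y + c false y) / 2 := by
      intro y
      have hb := base (fun z => f (Fin.cons (z 0) y)) (fun z => hf _)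
      rw [sum_cons_split (n := 0), sum_cons_split (n := 0)] at hb
      rw [Finset.univ_unique, Finset.sum_singleton, Finset.sum_singleton] at hb
      simp only [Fin.cons_zero] at hb
      have hsum : (2 : ℝ)⁻¹ * (f (Fin.cons true y) + f (Fin.cons false y)) = g y := by
        simp only [hg', hft, hff]; ring
      rw [hsum] at hb
      have hgr : ∀ (b : Bool) (w : Fin 0 → Bool), gradJNorm p (fun z => f (Fin.cons (z 0) y))
          (Fin.cons b w) (J (f (Fin.cons b y))) = c b y := by
        intro b w
        unfold gradJNorm
        rw [Fin.sum_univ_one]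
        have hdd : discDeriv (fun z => f (Fin.cons (z 0) y)) 0
            (Fin.cons b w) = d y := by
          simp only [discDeriv, Function.update_self, hd, hft, hff]
        rw [hdd, hc]
      rw [hgr true _, hgr false _] at hb
      calc J (g y) ≤ 2⁻¹ * (c true y + c false y) := hb
        _ = (c true y + c false y) / 2 := by ring
    -- pointwise inequality
    have hpoint : ∀ y, gradJNorm p g y (J (g y))
        ≤ (gradJNorm p f (Fin.cons true y) (J (f (Fin.cons true y)))
          + gradJNorm p f (Fin.cons false y) (J (f (Fin.cons false y)))) / 2 := by
      intro y
      have hk := key_ineq p hp (fun i => discDeriv ft i y) (fun i => discDeriv ff i y)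
        (c true y) (c false y) (J (g y)) (hc_nonneg _ _) (hc_nonneg _ _)
        (hJ _ (hg y)) (hbase y)
      rw [hc_pow, hc_pow] at hk
      have hDg : ∀ i : Fin n, discDeriv g i y = (discDeriv ft i y + discDeriv ff i y) / 2 := by
        intro i
        simp only [discDeriv, hg']
        ring
      have hLHS : gradJNorm p g y (J (g y))
          = ((∑ i, |(discDeriv ft i y + discDeriv ff i y) / 2| ^ p) + |J (g y)| ^ p) ^ (1 / p) := by
        unfold gradJNorm
        simp_rw [hDg]
      rw [hLHS, hgrad true, hgrad false]
      have e1 : (∑ i : Fin n, |discDeriv (fun z => f (Fin.cons true z)) i y| ^ p)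
          + (|d y| ^ p + |J (f (Fin.cons true y))| ^ p)
          = (∑ i : Fin n, |discDeriv ft i y| ^ p)
            + (|d y| ^ p + |J (f (Fin.cons true y))| ^ p) := rfl
      have e2 : (∑ i : Fin n, |discDeriv (fun z => f (Fin.cons false z)) i y| ^ p)
          + (|d y| ^ p + |J (f (Fin.cons false y))| ^ p)
          = (∑ i : Fin n, |discDeriv ff i y| ^ p)
            + (|d y| ^ p + |J (f (Fin.cons false y))| ^ p) := rfl
      rw [e1, e2]
      exact hk
    -- assemble
    have hsum_f : ∑ x, f x = 2 * ∑ y, g y := by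
      rw [sum_cons_split f, Finset.mul_sum]
      refine Finset.sum_congr rfl fun y _ => ?_
      simp only [hg', hft, hff]; ring
    have h2 : ((2 : ℝ) ^ (n + 1))⁻¹ * ∑ x, f x = ((2 : ℝ) ^ n)⁻¹ * ∑ y, g y := by
      rw [hsum_f, pow_succ]
      have : ((2 : ℝ) ^ n) ≠ 0 := by positivity
      field_simp
    rw [h2]
    refine (ih g hg).trans ?_
    have hstep : ((2 : ℝ) ^ n)⁻¹ * ∑ y, gradJNorm p g y (J (g y))
        ≤ ((2 : ℝ) ^ n)⁻¹ * ∑ y, (gradJNorm p f (Fin.cons true y) (J (f (Fin.cons true y)))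
          + gradJNorm p f (Fin.cons false y) (J (f (Fin.cons false y)))) / 2 := by
      apply mul_le_mul_of_nonneg_left (Finset.sum_le_sum fun y _ => hpoint y) (by positivity)
    refine hstep.trans_eq ?_
    rw [sum_cons_split (fun x => gradJNorm p f x (J (f x))), pow_succ, ← Finset.sum_div]
    have : ((2 : ℝ) ^ n) ≠ 0 := by positivity
    field_simp
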